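/- arXiv:math/0602246 — 11 statements merged into one kernel-verified Lean document; each statement's English description precedes it below -/
import Mathlib

section
/- In an admissible Poisson algebra, the associator satisfies the identity A(X,Y,Z) + A(Y,Z,X) - A(Y,X,Z) = 0 for all X, Y, Z. -/
variable {K : Type*} [Field K] {P : Type*} [AddCommGroup P] [Module K P]

/-- The associator of a bilinear multiplication. -/
def assocOf (m : P →ₗ[K] P →ₗ[K] P) (X Y Z : P) : P := m (m X Y) Z - m X (m Y Z)

/-- Admissible Poisson algebra condition:
`3 A(X,Y,Z) = (X·Z)·Y + (Y·Z)·X - (Y·X)·Z - (Z·X)·Y`. -/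
def IsAdmissible (m : P →ₗ[K] P →ₗ[K] P) : Prop :=
  ∀ X Y Z : P, (3 : ℤ) • assocOf m X Y Z =
    m (m X Z) Y + m (m Y Z) X - m (m Y X) Z - m (m Z X) Y

/-- The antisymmetrized bracket `{X,Y} = (X·Y - Y·X)/2`. -/
def brOf (m : P →ₗ[K] P →ₗ[K] P) (X Y : P) : P := (2 : K)⁻¹ • (m X Y - m Y X)

/-- The symmetrized product `X∙Y = (X·Y + Y·X)/2`. -/
def bulOf (m : P →ₗ[K] P →ₗ[K] P) (X Y : P) : P := (2 : K)⁻¹ • (m X Y + m Y X)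

/-- in an admissible Poisson algebra,
`A(X,Y,Z) + A(Y,Z,X) - A(Y,X,Z) = 0`. -/
theorem stmt3 (h2 : (2 : K) ≠ 0) (h3 : (3 : K) ≠ 0)
    (m : P →ₗ[K] P →ₗ[K] P) (hm : IsAdmissible m) :
    ∀ X Y Z : P, assocOf m X Y Z + assocOf m Y Z X - assocOf m Y X Z = 0 := by
  intro X Y Z
  have key : (3 : ℤ) • (assocOf m X Y Z + assocOf m Y Z X - assocOf m Y X Z) = 0 := by
    rw [smul_sub, smul_add, hm X Y Z, hm Y Z X, hm Y X Z]
    abel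
  rw [← Int.cast_smul_eq_zsmul K] at key
  have h3' : ((3 : ℤ) : K) ≠ 0 := by push_cast; exact h3
  exact (smul_eq_zero.mp key).resolve_left h3'
end

section
/- The system consisting of the flexibility identity A(X,Y,Z) + A(Z,Y,X) = 0 and the identity A(X,Y,Z) + A(Y,Z,X) - A(Y,X,Z) = 0 is equivalent to the single identity 2A(X,Y,Z) + (1/2)A(Y,X,Z) + A(Z,Y,X) + A(Y,Z,X) + (3/2)A(Z,X,Y) = 0, for the associator A of any bilinear multiplication on a vector space over a field of characteristic ≠ 2, 3. -/
/-! The two systems are linear conditions on the six values of a function at the permutations of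
`(x, y, z)`. The single identity is a combination of permuted instances of the flexibility identity
and the second identity; conversely each of those is a combination of permuted instances of the
single identity, with denominators `6` and `12`, which is where characteristic `≠ 2, 3` enters. -/

variable {K : Type*} [Field K] {P : Type*} [AddCommGroup P] [Module K P]

section
variable {V α : Type*} [AddCommGroup V] [Module K V] (A : α → α → α → V)

def FlexibleIdentity : Prop := ∀ x y z, A x y z + A z y x = 0

def CyclicSwapIdentity : Prop := ∀ x y z, A x y z + A y z x - A y x z = 0

variable (K) in
def CombinedIdentity : Prop :=
  ∀ x y z, (2 : K) • A x y z + ((1 : K) / 2) • A y x z + A z y x + A y z x +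
    ((3 : K) / 2) • A z x y = 0

variable {A}

theorem combinedIdentity_of_flexible_of_cyclicSwap (h2 : (2 : K) ≠ 0)
    (hf : FlexibleIdentity A) (hs : CyclicSwapIdentity A) : CombinedIdentity K A := fun x y z => by
  linear_combination (norm := match_scalars <;> field_simp <;> ring)
    hs x y z + hf x y z + ((3 : K) / 2) • hf y x z

namespace CombinedIdentity

theorem flexible (h2 : (2 : K) ≠ 0) (h3 : (3 : K) ≠ 0) (h : CombinedIdentity K A) :
    FlexibleIdentity A := fun x y z => by
  linear_combination (norm := match_scalars <;> field_simp <;> ring)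
    (5 / (2 * 3) : K) • h x y z + (1 / (2 * 3) : K) • h x z y - (2 / 3 : K) • h z x y

theorem cyclicSwap (h2 : (2 : K) ≠ 0) (h3 : (3 : K) ≠ 0) (h : CombinedIdentity K A) :
    CyclicSwapIdentity A := fun x y z => by
  linear_combination (norm := match_scalars <;> field_simp <;> ring)
    (11 / (2 * 2 * 3) : K) • h x y z + (7 / (2 * 2 * 3) : K) • h x z y - h y x z -
      (1 / 3 : K) • h z x y

end CombinedIdentity

theorem flexible_and_cyclicSwap_iff_combined (h2 : (2 : K) ≠ 0) (h3 : (3 : K) ≠ 0) :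
    FlexibleIdentity A ∧ CyclicSwapIdentity A ↔ CombinedIdentity K A :=
  ⟨fun ⟨hf, hs⟩ => combinedIdentity_of_flexible_of_cyclicSwap h2 hf hs,
    fun h => ⟨h.flexible h2 h3, h.cyclicSwap h2 h3⟩⟩

end

/-- the system of the flexibility identity and the identity
`A(X,Y,Z) + A(Y,Z,X) - A(Y,X,Z) = 0` is equivalent to the single identity
`2A(X,Y,Z) + (1/2)A(Y,X,Z) + A(Z,Y,X) + A(Y,Z,X) + (3/2)A(Z,X,Y) = 0`. -/
theorem stmt4 (h2 : (2 : K) ≠ 0) (h3 : (3 : K) ≠ 0)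
    (m : P →ₗ[K] P →ₗ[K] P) :
    ((∀ X Y Z : P, assocOf m X Y Z + assocOf m Z Y X = 0) ∧
      (∀ X Y Z : P, assocOf m X Y Z + assocOf m Y Z X - assocOf m Y X Z = 0)) ↔
      (∀ X Y Z : P,
        (2 : K) • assocOf m X Y Z + ((1 : K) / 2) • assocOf m Y X Z +
          assocOf m Z Y X + assocOf m Y Z X + ((3 : K) / 2) • assocOf m Z X Y = 0) :=
  flexible_and_cyclicSwap_iff_combined h2 h3
end

section
/- Every admissible Poisson algebra is power associative: for any element X, defining X^1 = X and X^{i+1} = X·X^i, one has X^i · X^j = X^{i+j} for all i, j ≥ 1. -/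
variable {K : Type*} [Field K] {P : Type*} [AddCommGroup P] [Module K P]

/-- Powers: `pw m X n = X^(n+1)`, i.e. `X^1 = X`, `X^(i+1) = X · X^i`. -/
def pw (m : P →ₗ[K] P →ₗ[K] P) (X : P) : ℕ → P
  | 0 => X
  | n + 1 => m X (pw m X n)

/-! Once 3 is invertible, admissibility makes `X ∘ Y = X·Y + Y·X` associative and the commutator
`[X, -]` a derivation of `∘`. Hence an element commuting with `Y` and `Z` commutes with `Y ∘ Z`;
as `2 X^(n+1) = X ∘ X^n` whenever `[X, X^n] = 0`, induction shows that all powers of `X` commute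
and, by associativity of `∘`, that `X^i ∘ X^j = 2 X^(i+j)`. Then
`2 X^i·X^j = X^i ∘ X^j + [X^i, X^j] = 2 X^(i+j)`. -/

section

variable (m : P →ₗ[K] P →ₗ[K] P)

def jordanOf (a b : P) : P := m a b + m b a

def commOf (a b : P) : P := m a b - m b a

theorem commOf_self (a : P) : commOf m a a = 0 := sub_self _

theorem commOf_eq_zero_iff {a b : P} : commOf m a b = 0 ↔ m a b = m b a := sub_eq_zero

theorem commOf_eq_zero_symm {a b : P} (h : commOf m a b = 0) : commOf m b a = 0 := by
  rw [commOf_eq_zero_iff] at h ⊢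
  exact h.symm

theorem jordanOf_zero_left (a : P) : jordanOf m 0 a = 0 := by
  simp [jordanOf]

theorem jordanOf_zero_right (a : P) : jordanOf m a 0 = 0 := by
  simp [jordanOf]

theorem jordanOf_smul_left (t : K) (a b : P) : jordanOf m (t • a) b = t • jordanOf m a b := by
  simp only [jordanOf, map_smul, LinearMap.smul_apply, smul_add]

theorem jordanOf_smul_right (t : K) (a b : P) : jordanOf m a (t • b) = t • jordanOf m a b := by
  simp only [jordanOf, map_smul, LinearMap.smul_apply, smul_add]

theorem commOf_smul_right (t : K) (a b : P) : commOf m a (t • b) = t • commOf m a b := by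
  simp only [commOf, map_smul, LinearMap.smul_apply, smul_sub]

theorem jordanOf_add_commOf (a b : P) : jordanOf m a b + commOf m a b = (2 : K) • m a b := by
  rw [jordanOf, commOf, two_smul]
  abel

theorem jordanOf_of_commOf_eq_zero {a b : P} (h : commOf m a b = 0) :
    jordanOf m a b = (2 : K) • m a b := by
  rw [← jordanOf_add_commOf, h, add_zero]

variable {m}

theorem IsAdmissible.jordanOf_assoc (hm : IsAdmissible m) (h3 : (3 : K) ≠ 0) (X Y Z : P) :
    jordanOf m (jordanOf m X Y) Z = jordanOf m X (jordanOf m Y Z) := by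
  have h₁ := hm X Y Z
  have h₂ := hm X Z Y
  have h₃ := hm Z X Y
  have h₄ := hm Z Y X
  simp only [assocOf] at h₁ h₂ h₃ h₄
  apply smul_right_injective P h3
  simp only [jordanOf, map_add, LinearMap.add_apply]
  linear_combination (norm := module) h₁ + h₂ - h₃ - h₄

theorem IsAdmissible.commOf_jordanOf (hm : IsAdmissible m) (h3 : (3 : K) ≠ 0) (X Y Z : P) :
    commOf m X (jordanOf m Y Z) = jordanOf m (commOf m X Y) Z + jordanOf m Y (commOf m X Z) := by
  have h₁ := hm X Y Z
  have h₂ := hm X Z Y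
  have h₃ := hm Y X Z
  have h₄ := hm Y Z X
  have h₅ := hm Z X Y
  have h₆ := hm Z Y X
  simp only [assocOf] at h₁ h₂ h₃ h₄ h₅ h₆
  apply smul_right_injective P h3
  simp only [jordanOf, commOf, map_add, map_sub, LinearMap.add_apply, LinearMap.sub_apply]
  linear_combination (norm := module) -h₁ - h₂ + h₃ - h₄ + h₅ - h₆

theorem IsAdmissible.commOf_eq_zero_of_jordanOf_eq (hm : IsAdmissible m) (h2 : (2 : K) ≠ 0)
    (h3 : (3 : K) ≠ 0) {X Y Z W : P} (hY : commOf m X Y = 0) (hZ : commOf m X Z = 0)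
    (hW : jordanOf m Y Z = (2 : K) • W) : commOf m X W = 0 := by
  rw [← smul_eq_zero_iff_right h2, ← commOf_smul_right, ← hW, hm.commOf_jordanOf h3, hY, hZ,
    jordanOf_zero_left, jordanOf_zero_right, add_zero]

theorem IsAdmissible.commOf_self_pw (hm : IsAdmissible m) (h2 : (2 : K) ≠ 0) (h3 : (3 : K) ≠ 0)
    (X : P) : ∀ n, commOf m X (pw m X n) = 0
  | 0 => commOf_self m X
  | n + 1 => hm.commOf_eq_zero_of_jordanOf_eq h2 h3 (commOf_self m X) (hm.commOf_self_pw h2 h3 X n)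
      (jordanOf_of_commOf_eq_zero m (hm.commOf_self_pw h2 h3 X n))

theorem IsAdmissible.jordanOf_self_pw (hm : IsAdmissible m) (h2 : (2 : K) ≠ 0)
    (h3 : (3 : K) ≠ 0) (X : P) (n : ℕ) :
    jordanOf m X (pw m X n) = (2 : K) • pw m X (n + 1) :=
  jordanOf_of_commOf_eq_zero m (hm.commOf_self_pw h2 h3 X n)

theorem IsAdmissible.commOf_pw_pw (hm : IsAdmissible m) (h2 : (2 : K) ≠ 0) (h3 : (3 : K) ≠ 0)
    (X : P) (i j : ℕ) : commOf m (pw m X i) (pw m X j) = 0 := by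
  induction i generalizing j with
  | zero => exact hm.commOf_self_pw h2 h3 X j
  | succ i ih =>
    refine commOf_eq_zero_symm m (hm.commOf_eq_zero_of_jordanOf_eq h2 h3 ?_ ?_
      (hm.jordanOf_self_pw h2 h3 X i))
    · exact commOf_eq_zero_symm m (hm.commOf_self_pw h2 h3 X j)
    · exact commOf_eq_zero_symm m (ih j)

theorem IsAdmissible.jordanOf_pw_pw (hm : IsAdmissible m) (h2 : (2 : K) ≠ 0) (h3 : (3 : K) ≠ 0)
    (X : P) (i j : ℕ) : jordanOf m (pw m X i) (pw m X j) = (2 : K) • pw m X (i + j + 1) := by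
  induction i generalizing j with
  | zero => rw [Nat.zero_add]; exact hm.jordanOf_self_pw h2 h3 X j
  | succ i ih =>
    apply smul_right_injective P h2
    calc (2 : K) • jordanOf m (pw m X (i + 1)) (pw m X j)
        = jordanOf m (jordanOf m X (pw m X i)) (pw m X j) := by
          rw [hm.jordanOf_self_pw h2 h3, jordanOf_smul_left]
      _ = (2 : K) • jordanOf m X (pw m X (i + j + 1)) := by
          rw [hm.jordanOf_assoc h3, ih, jordanOf_smul_right]
      _ = (2 : K) • (2 : K) • pw m X (i + 1 + j + 1) := by
          rw [hm.jordanOf_self_pw h2 h3, Nat.add_right_comm i 1 j]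

end

/-- every admissible Poisson algebra is power associative:
`X^i · X^j = X^(i+j)` for all `i, j ≥ 1` (here `pw m X n` denotes `X^(n+1)`). -/
theorem stmt5 (h2 : (2 : K) ≠ 0) (h3 : (3 : K) ≠ 0)
    (m : P →ₗ[K] P →ₗ[K] P) (hm : IsAdmissible m) :
    ∀ (X : P) (i j : ℕ), m (pw m X i) (pw m X j) = pw m X (i + j + 1) := by
  intro X i j
  apply smul_right_injective P h2
  calc (2 : K) • m (pw m X i) (pw m X j)
      = jordanOf m (pw m X i) (pw m X j) + commOf m (pw m X i) (pw m X j) :=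
        (jordanOf_add_commOf m _ _).symm
    _ = (2 : K) • pw m X (i + j + 1) := by
        rw [hm.jordanOf_pw_pw h2 h3, hm.commOf_pw_pw h2 h3, add_zero]
end

section
/- In an admissible Poisson algebra, for any element X and any i, j ≥ 1, the powers commute: X^i · X^j = X^j · X^i. -/
variable {K : Type*} [Field K] {P : Type*} [AddCommGroup P] [Module K P]

/-!
Admissibility makes the bracket with `A` a derivation of the symmetrized product, so the elements
commuting with `A` are closed under `∙`. Once `X` commutes with `X^n` we have `X^(n+1) = X ∙ X^n`,
so induction shows first that `X` commutes with every power and then that so does every `X^i`.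
-/

section AdmissiblePoisson

variable {m : P →ₗ[K] P →ₗ[K] P}

/-- Summing the admissibility identity over the six permutations of `(X, Y, Z)` with signs
shows that the bracket with `X` is a derivation of the symmetrized product. -/
theorem brOf_bulOf (h3 : (3 : K) ≠ 0) (hm : IsAdmissible m) (X Y Z : P) :
    brOf m X (bulOf m Y Z) = bulOf m (brOf m X Y) Z + bulOf m Y (brOf m X Z) := by
  apply smul_right_injective P h3
  have e1 := hm X Y Z
  have e2 := hm X Z Y
  have e3 := hm Y X Z
  have e4 := hm Y Z X
  have e5 := hm Z X Y
  have e6 := hm Z Y X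
  simp only [assocOf] at e1 e2 e3 e4 e5 e6
  simp only [brOf, bulOf, map_smul, map_add, map_sub, LinearMap.smul_apply, LinearMap.add_apply,
    LinearMap.sub_apply]
  linear_combination (norm := module) ((2 : K)⁻¹ * (2 : K)⁻¹) • (-e1 - e2 + e3 - e4 + e5 - e6)

theorem brOf_eq_zero_iff (h2 : (2 : K) ≠ 0) {X Y : P} : brOf m X Y = 0 ↔ m X Y = m Y X := by
  simp [brOf, h2, sub_eq_zero]

theorem bulOf_eq_of_commute (h2 : (2 : K) ≠ 0) {X Y : P} (h : m X Y = m Y X) :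
    bulOf m X Y = m X Y := by
  rw [bulOf, ← h, ← two_smul K, smul_smul, inv_mul_cancel₀ h2, one_smul]

theorem commute_bulOf (h2 : (2 : K) ≠ 0) (h3 : (3 : K) ≠ 0) (hm : IsAdmissible m) {A Y Z : P}
    (hY : m A Y = m Y A) (hZ : m A Z = m Z A) :
    m A (bulOf m Y Z) = m (bulOf m Y Z) A := by
  rw [← brOf_eq_zero_iff h2] at hY hZ ⊢
  rw [brOf_bulOf h3 hm, hY, hZ]
  simp [bulOf]

theorem commute_self_pw (h2 : (2 : K) ≠ 0) (h3 : (3 : K) ≠ 0) (hm : IsAdmissible m) (X : P) :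
    ∀ n, m X (pw m X n) = m (pw m X n) X
  | 0 => rfl
  | n + 1 => by
    have ih := commute_self_pw h2 h3 hm X n
    simpa only [pw, bulOf_eq_of_commute h2 ih] using commute_bulOf h2 h3 hm rfl ih

end AdmissiblePoisson

/-- in an admissible Poisson algebra powers of an element commute:
`X^i · X^j = X^j · X^i` for all `i, j ≥ 1` (here `pw m X n` denotes `X^(n+1)`). -/
theorem stmt6 (h2 : (2 : K) ≠ 0) (h3 : (3 : K) ≠ 0)
    (m : P →ₗ[K] P →ₗ[K] P) (hm : IsAdmissible m) :
    ∀ (X : P) (i j : ℕ), m (pw m X i) (pw m X j) = m (pw m X j) (pw m X i) := by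
  intro X i j
  induction j with
  | zero => exact (commute_self_pw h2 h3 hm X i).symm
  | succ j ih =>
    have hX := commute_self_pw h2 h3 hm X j
    simpa only [pw, bulOf_eq_of_commute h2 hX] using
      commute_bulOf h2 h3 hm (commute_self_pw h2 h3 hm X i).symm ih
end

section
/- Let P be an admissible Poisson algebra such that the center of the associated Lie algebra (P, {,}) is zero. Then P has no nonzero idempotent element. -/
/-!
The symmetrized product `X∙Y` of an admissible algebra is associative and commutative, and the
bracket is a derivation of it (Leibniz rule); both follow from the admissibility identity by
dividing by `3`. For an idempotent `e` (so `e∙e = e`) and any `y`, put `D = {e,y}`. Leibniz gives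
`D = {e∙e, y} = 2 e∙D`, and associativity then gives `e∙D = 2 e∙(e∙D) = 2 (e∙e)∙D = 2 e∙D`,
so `e∙D = 0` and `D = 0`. Thus `e` is central, hence zero.
-/

variable {K : Type*} [Field K] {P : Type*} [AddCommGroup P] [Module K P]

theorem bulOf_comm (m : P →ₗ[K] P →ₗ[K] P) (X Y : P) : bulOf m X Y = bulOf m Y X := by
  rw [bulOf, bulOf, add_comm]

theorem bulOf_smul_right (m : P →ₗ[K] P →ₗ[K] P) (c : K) (X Y : P) :
    bulOf m X (c • Y) = c • bulOf m X Y := by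
  simp only [bulOf, map_smul, LinearMap.smul_apply, ← smul_add, smul_comm c]

section

variable {m : P →ₗ[K] P →ₗ[K] P}

theorem bulOf_self_of_idempotent (h2 : (2 : K) ≠ 0) {e : P} (he : m e e = e) :
    bulOf m e e = e := by
  rw [bulOf, he, ← two_smul K e, smul_smul, inv_mul_cancel₀ h2, one_smul]

theorem IsAdmissible.three_smul_assocOf (hm : IsAdmissible m) (X Y Z : P) :
    (3 : K) • (m (m X Y) Z - m X (m Y Z)) =
      m (m X Z) Y + m (m Y Z) X - m (m Y X) Z - m (m Z X) Y := by
  rw [← hm, assocOf, show (3 : K) = ((3 : ℤ) : K) by norm_num, Int.cast_smul_eq_zsmul]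

theorem IsAdmissible.bulOf_assoc (h3 : (3 : K) ≠ 0) (hm : IsAdmissible m) (X Y Z : P) :
    bulOf m (bulOf m X Y) Z = bulOf m X (bulOf m Y Z) := by
  have h := hm.three_smul_assocOf
  rw [← sub_eq_zero, ← smul_right_injective P h3 |>.eq_iff, smul_zero]
  simp only [bulOf, map_smul, map_add, LinearMap.smul_apply, LinearMap.add_apply]
  linear_combination (norm := module)
    (2 : K)⁻¹ • (2 : K)⁻¹ • (h X Y Z + h X Z Y - h Z X Y - h Z Y X)

theorem IsAdmissible.brOf_bulOf_left (h3 : (3 : K) ≠ 0) (hm : IsAdmissible m) (X Y Z : P) :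
    brOf m (bulOf m X Y) Z = bulOf m X (brOf m Y Z) + bulOf m (brOf m X Z) Y := by
  have h := hm.three_smul_assocOf
  rw [← sub_eq_zero, ← smul_right_injective P h3 |>.eq_iff, smul_zero]
  simp only [brOf, bulOf, map_smul, map_add, map_sub, LinearMap.smul_apply, LinearMap.add_apply,
    LinearMap.sub_apply]
  linear_combination (norm := module) (2 : K)⁻¹ • (2 : K)⁻¹ •
    (h X Y Z - h X Z Y + h Y X Z - h Y Z X + h Z X Y + h Z Y X)

theorem IsAdmissible.brOf_eq_zero_of_idempotent (h2 : (2 : K) ≠ 0) (h3 : (3 : K) ≠ 0)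
    (hm : IsAdmissible m) {e : P} (he : m e e = e) (y : P) : brOf m e y = 0 := by
  set D := brOf m e y
  have hee := bulOf_self_of_idempotent h2 he
  have hD : D = (2 : K) • bulOf m e D := by
    have h := hm.brOf_bulOf_left h3 e e y
    rwa [hee, bulOf_comm m D e, ← two_smul K] at h
  have heD : bulOf m e D = (2 : K) • bulOf m e D :=
    calc bulOf m e D = (2 : K) • bulOf m e (bulOf m e D) := by
          conv_lhs => rw [hD, bulOf_smul_right]
      _ = (2 : K) • bulOf m e D := by rw [← hm.bulOf_assoc h3, hee]
  have heD0 : bulOf m e D = 0 := by linear_combination (norm := module) -heD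
  rw [hD, heD0, smul_zero]

end

/-- if the center of the associated Lie algebra of an admissible
Poisson algebra is zero, then the algebra has no nonzero idempotent. -/
theorem stmt8 (h2 : (2 : K) ≠ 0) (h3 : (3 : K) ≠ 0)
    (m : P →ₗ[K] P →ₗ[K] P) (hm : IsAdmissible m)
    (hcenter : ∀ x : P, (∀ y : P, brOf m x y = 0) → x = 0) :
    ∀ e : P, m e e = e → e = 0 :=
  fun _ he => hcenter _ (hm.brOf_eq_zero_of_idempotent h2 h3 he)
end

section
/- Let e be a nonzero idempotent of an admissible Poisson algebra P, and let P_{0,0} = {x : e·x = x·e = 0} and P_{1,1} = {x : e·x = x·e = x}. Then P_{0,0} and P_{1,1} are closed under the multiplication ·, i.e., they are subalgebras of P. -/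
variable {K : Type*} [Field K] {P : Type*} [AddCommGroup P] [Module K P]

/-! For any `e` and any scalar `a`, the two-sided eigenspace `{x : e·x = x·e = a x}` is closed
under `·`; `P₀₀` and `P₁₁` are the cases `a = 0` and `a = 1`. Writing
`u(x,y) = (x·y)·e - a (x·y)`, admissibility at `(x,y,e)` gives `3 u(x,y) = -u(y,x)`, hence
`9 u(x,y) = u(x,y)` and `u = 0` since `8 ≠ 0`; admissibility at `(e,x,y)` then reduces to
`3 (e·(x·y) - a (x·y)) = 0`. -/

namespace IsAdmissible

variable {m : P →ₗ[K] P →ₗ[K] P} {e x y : P} {a : K}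

theorem three_smul_eq (hm : IsAdmissible m) (X Y Z : P) :
    (3 : K) • (m (m X Y) Z - m X (m Y Z)) =
      m (m X Z) Y + m (m Y Z) X - m (m Y X) Z - m (m Z X) Y := by
  rw [← hm X Y Z, assocOf, ← Int.cast_smul_eq_zsmul K]
  norm_num

theorem three_smul_mul_right_sub_eq_neg (hm : IsAdmissible m) (hex : m e x = a • x)
    (hxe : m x e = a • x) (hye : m y e = a • y) :
    (3 : K) • (m (m x y) e - a • m x y) = -(m (m y x) e - a • m y x) := by
  have h := hm.three_smul_eq x y e
  simp only [hxe, hye, hex, map_smul, LinearMap.smul_apply] at h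
  linear_combination (norm := module) h

theorem mul_mul_right_eq_smul (hm : IsAdmissible m) (h2 : (2 : K) ≠ 0)
    (hex : m e x = a • x) (hxe : m x e = a • x) (hey : m e y = a • y) (hye : m y e = a • y) :
    m (m x y) e = a • m x y := by
  have hxy := hm.three_smul_mul_right_sub_eq_neg hex hxe hye
  have hyx := hm.three_smul_mul_right_sub_eq_neg hey hye hxe
  have h8 : (8 : K) ≠ 0 := by
    rw [show (8 : K) = 2 ^ 3 by norm_num]
    exact pow_ne_zero 3 h2
  have : (8 : K) • (m (m x y) e - a • m x y) = 0 := by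
    linear_combination (norm := module) (3 : K) • hxy - hyx
  exact sub_eq_zero.mp ((smul_eq_zero.mp this).resolve_left h8)

theorem mul_mul_left_eq_smul (hm : IsAdmissible m) (h3 : (3 : K) ≠ 0)
    (hex : m e x = a • x) (hxe : m x e = a • x) (hey : m e y = a • y) (hye : m y e = a • y)
    (hright : m (m x y) e = a • m x y) :
    m e (m x y) = a • m x y := by
  have h := hm.three_smul_eq e x y
  simp only [hxe, hye, hex, hey, hright, map_smul, LinearMap.smul_apply] at h
  have : (3 : K) • (m e (m x y) - a • m x y) = 0 := by
    linear_combination (norm := module) -h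
  exact sub_eq_zero.mp ((smul_eq_zero.mp this).resolve_left h3)

theorem mul_mul_eq_smul (hm : IsAdmissible m) (h2 : (2 : K) ≠ 0) (h3 : (3 : K) ≠ 0)
    (hex : m e x = a • x) (hxe : m x e = a • x) (hey : m e y = a • y) (hye : m y e = a • y) :
    m e (m x y) = a • m x y ∧ m (m x y) e = a • m x y :=
  have hright := hm.mul_mul_right_eq_smul h2 hex hxe hey hye
  ⟨hm.mul_mul_left_eq_smul h3 hex hxe hey hye hright, hright⟩

end IsAdmissible

theorem stmt9_general (h2 : (2 : K) ≠ 0) (h3 : (3 : K) ≠ 0)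
    (m : P →ₗ[K] P →ₗ[K] P) (hm : IsAdmissible m)
    (e : P) :
    (∀ x y : P, m e x = 0 → m x e = 0 → m e y = 0 → m y e = 0 →
      m e (m x y) = 0 ∧ m (m x y) e = 0) ∧
    (∀ x y : P, m e x = x → m x e = x → m e y = y → m y e = y →
      m e (m x y) = m x y ∧ m (m x y) e = m x y) := by
  refine ⟨fun x y hex hxe hey hye => ?_, fun x y hex hxe hey hye => ?_⟩
  · simpa using hm.mul_mul_eq_smul (a := 0) h2 h3
      (by simpa using hex) (by simpa using hxe) (by simpa using hey) (by simpa using hye)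
  · simpa using hm.mul_mul_eq_smul (a := 1) h2 h3
      (by simpa using hex) (by simpa using hxe) (by simpa using hey) (by simpa using hye)

/-- for a nonzero idempotent `e` of an admissible Poisson algebra,
the Pierce components `P₀₀ = {x : e·x = x·e = 0}` and `P₁₁ = {x : e·x = x·e = x}`
are closed under the multiplication. -/
theorem stmt9 (h2 : (2 : K) ≠ 0) (h3 : (3 : K) ≠ 0)
    (m : P →ₗ[K] P →ₗ[K] P) (hm : IsAdmissible m)
    (e : P) (he0 : e ≠ 0) (he : m e e = e) :
    (∀ x y : P, m e x = 0 → m x e = 0 → m e y = 0 → m y e = 0 →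
      m e (m x y) = 0 ∧ m (m x y) e = 0) ∧
    (∀ x y : P, m e x = x → m x e = x → m e y = y → m y e = y →
      m e (m x y) = m x y ∧ m (m x y) e = m x y) :=
  stmt9_general h2 h3 m hm e
end

section
/- Let e be a nonzero idempotent of an admissible Poisson algebra P over a field of characteristic ≠ 2, 3. Then P decomposes as a direct sum P = P_{0,0} ⊕ P_{1,1} where P_{0,0} = {x : e·x = x·e = 0} and P_{1,1} = {x : e·x = x·e = x}. -/
variable {K : Type*} [Field K] {P : Type*} [AddCommGroup P] [Module K P]

/-! Write `L` and `R` for left and right multiplication by `e`. The admissibility identity at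
`(e, v, e)`, `(v, e, e)` and `(e, e, v)` says that `L` and `R` commute and satisfy
`2R² + 2RL = 3R + L` and `R² + 4L = 2RL + 3L²`; when `3` is invertible these force `R = L`.
The first relation then reads `4L² = 4L`, so `L` is an idempotent operator and
`P = ker L ⊕ im L`, which are the Peirce spaces `P₀₀` and `P₁₁`. -/

theorem Commute.eq_of_quadratic_relations {A : Type*} [Ring A] {a b : A} (hab : Commute a b)
    (h3 : IsUnit (3 : A)) (h₁ : 2 * (a * a) + 2 * (a * b) = 3 * a + b)
    (h₂ : a * a + 4 * b = 2 * (a * b) + 3 * (b * b)) : a = b := by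
  rw [← sub_eq_zero] at h₁ h₂ ⊢
  have hab' : a * b - b * a = 0 := sub_eq_zero.mpr hab.eq
  refine h3.mul_right_eq_zero.mp ?_
  calc 3 * (a - b)
      = (-a + 3 * b - 1) * (2 * (a * a) + 2 * (a * b) - (3 * a + b))
        + (2 * a - 1) * (a * a + 4 * b - (2 * (a * b) + 3 * (b * b)))
        + (a * b - b * a) * (6 * a + 6 * b - 9) + 6 * a * (a * b - b * a) := by noncomm_ring
    _ = 0 := by rw [h₁, h₂, hab']; simp

theorem isUnit_ofNat_of_algebra {F A : Type*} [Semifield F] [Semiring A] [Algebra F A]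
    {n : ℕ} [n.AtLeastTwo] (h : (OfNat.ofNat n : F) ≠ 0) : IsUnit (OfNat.ofNat n : A) :=
  map_ofNat (algebraMap F A) n ▸ h.isUnit.map _

theorem IsIdempotentElem.existsUnique_ker_add_fixed {R M : Type*} [Semiring R] [AddCommGroup M]
    [Module R M] {f : Module.End R M} (hf : IsIdempotentElem f) (x : M) :
    ∃! p : M × M, f p.1 = 0 ∧ f p.2 = p.2 ∧ x = p.1 + p.2 := by
  have hff (y : M) : f (f y) = f y := LinearMap.congr_fun hf y
  refine ⟨(x - f x, f x),
    ⟨by rw [map_sub, hff, sub_self], hff x, (sub_add_cancel x (f x)).symm⟩, ?_⟩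
  rintro ⟨q₁, q₂⟩ ⟨h₁, h₂, rfl⟩
  have hq₂ : f (q₁ + q₂) = q₂ := by rw [map_add, h₁, h₂, zero_add]
  simp only [hq₂, add_sub_cancel_right]

namespace IsAdmissible

variable {m : P →ₗ[K] P →ₗ[K] P} {e : P}

theorem commute_flip_of_idem (hm : IsAdmissible m) (h3 : (3 : K) ≠ 0) (he : m e e = e) :
    Commute (m.flip e) (m e) := by
  ext v
  have h := hm e v e
  simp only [assocOf, he] at h
  refine smul_right_injective P h3 ?_
  simp only [Module.End.mul_apply, LinearMap.flip_apply]
  linear_combination (norm := module) h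

theorem flip_sq_relation_of_idem (hm : IsAdmissible m) (he : m e e = e) :
    2 * (m.flip e * m.flip e) + 2 * (m.flip e * m e) = 3 * m.flip e + m e := by
  ext v
  have h := hm v e e
  simp only [assocOf, he] at h
  simp only [LinearMap.add_apply, Module.End.mul_apply, Module.End.ofNat_apply,
    LinearMap.flip_apply]
  linear_combination (norm := module) h

theorem sq_relation_of_idem (hm : IsAdmissible m) (he : m e e = e) :
    m.flip e * m.flip e + 4 * m e = 2 * (m.flip e * m e) + 3 * (m e * m e) := by
  ext v
  have h := hm e e v
  simp only [assocOf, he] at h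
  simp only [LinearMap.add_apply, Module.End.mul_apply, Module.End.ofNat_apply,
    LinearMap.flip_apply]
  linear_combination (norm := module) h

theorem flip_eq_of_idem (hm : IsAdmissible m) (h3 : (3 : K) ≠ 0) (he : m e e = e) :
    m.flip e = m e :=
  (hm.commute_flip_of_idem h3 he).eq_of_quadratic_relations (isUnit_ofNat_of_algebra h3)
    (hm.flip_sq_relation_of_idem he) (hm.sq_relation_of_idem he)

theorem isIdempotentElem_of_idem (hm : IsAdmissible m) (h2 : (2 : K) ≠ 0) (h3 : (3 : K) ≠ 0)
    (he : m e e = e) : IsIdempotentElem (m e) := by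
  have h := hm.flip_sq_relation_of_idem he
  rw [hm.flip_eq_of_idem h3 he] at h
  have h4 : IsUnit (4 : Module.End K P) :=
    isUnit_ofNat_of_algebra (by rw [show (4 : K) = 2 * 2 by norm_num]; exact mul_ne_zero h2 h2)
  exact h4.mul_left_cancel (by linear_combination (norm := noncomm_ring) h)

end IsAdmissible

theorem stmt10_general (h2 : (2 : K) ≠ 0) (h3 : (3 : K) ≠ 0)
    (m : P →ₗ[K] P →ₗ[K] P) (hm : IsAdmissible m)
    (e : P) (he : m e e = e) :
    ∀ x : P, ∃! p : P × P,
      (m e p.1 = 0 ∧ m p.1 e = 0) ∧ (m e p.2 = p.2 ∧ m p.2 e = p.2) ∧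
        x = p.1 + p.2 := by
  have hflip (v : P) : m v e = m e v := LinearMap.congr_fun (hm.flip_eq_of_idem h3 he) v
  intro x
  simpa only [hflip, and_self] using
    (hm.isIdempotentElem_of_idem h2 h3 he).existsUnique_ker_add_fixed x

/-- Pierce decomposition. For a nonzero idempotent `e` of an
admissible Poisson algebra, `P = P₀₀ ⊕ P₁₁`: every element decomposes uniquely
as a sum of an element of `P₀₀ = {x : e·x = x·e = 0}` and an element of
`P₁₁ = {x : e·x = x·e = x}`. -/
theorem stmt10 (h2 : (2 : K) ≠ 0) (h3 : (3 : K) ≠ 0)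
    (m : P →ₗ[K] P →ₗ[K] P) (hm : IsAdmissible m)
    (e : P) (he0 : e ≠ 0) (he : m e e = e) :
    ∀ x : P, ∃! p : P × P,
      (m e p.1 = 0 ∧ m p.1 e = 0) ∧ (m e p.2 = p.2 ∧ m p.2 e = p.2) ∧
        x = p.1 + p.2 :=
  stmt10_general h2 h3 m hm e he
end

section
/- The 3-dimensional algebra P with basis e₁, e₂, e₃ and products e_i·e_i = 0, e₁·e₂ = -e₂·e₁ = e₂, e₁·e₃ = -e₃·e₁ = -e₃, e₂·e₃ = -e₃·e₂ = e₁ (all other products zero) is an admissible Poisson algebra in which every element is nilpotent, but P·P = P, so P is a nilalgebra that is not nilpotent. -/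
variable {K : Type*} [Field K] {P : Type*} [AddCommGroup P] [Module K P]

/-- The multiplication of the 3-dimensional example: on coordinates
`x = (x₀,x₁,x₂)`, `m x y = (x₁y₂ - x₂y₁, x₀y₁ - y₀x₁, -(x₀y₂ - y₀x₂))`,
so that `e₁·e₂ = e₂`, `e₁·e₃ = -e₃`, `e₂·e₃ = e₁` (anti-commutative). -/
noncomputable def m12 : (Fin 3 → ℂ) →ₗ[ℂ] (Fin 3 → ℂ) →ₗ[ℂ] (Fin 3 → ℂ) :=
  LinearMap.mk₂ ℂ
    (fun x y => ![x 1 * y 2 - x 2 * y 1, x 0 * y 1 - y 0 * x 1, -(x 0 * y 2 - y 0 * x 2)])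
    (by intro x x' y; funext i; fin_cases i <;> simp <;> ring)
    (by intro c x y; funext i; fin_cases i <;> simp <;> ring)
    (by intro x y y'; funext i; fin_cases i <;> simp <;> ring)
    (by intro c x y; funext i; fin_cases i <;> simp <;> ring)

/-! For an anticommutative algebra, `3 A(X,Y,Z)` minus the right-hand side of the admissibility
identity equals twice the Jacobiator, so Lie algebras are admissible. The example is `sl₂`
(`e₁ = h/2`, `e₂ = e`, `e₃ = f/2`), hence a Lie algebra; every square vanishes, so `x² = 0`; and each basis
vector is a product of two others, so `P·P = P`. -/

theorem neg_apply_swap_of_self_eq_zero {m : P →ₗ[K] P →ₗ[K] P} (hself : ∀ x, m x x = 0)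
    (x y : P) : m y x = -m x y := by
  have h := hself (x + y)
  simp only [map_add, LinearMap.add_apply, hself, zero_add, add_zero] at h
  exact eq_neg_of_add_eq_zero_left h

theorem isAdmissible_of_jacobi {m : P →ₗ[K] P →ₗ[K] P} (hself : ∀ x, m x x = 0)
    (hjac : ∀ x y z, m (m x y) z + m (m y z) x + m (m z x) y = 0) : IsAdmissible m := by
  intro X Y Z
  have swap := neg_apply_swap_of_self_eq_zero hself
  have h₁ : m X (m Y Z) = -m (m Y Z) X := swap _ _
  have h₂ : m (m X Z) Y = -m (m Z X) Y := by rw [swap Z X, map_neg, LinearMap.neg_apply]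
  have h₃ : m (m Y X) Z = -m (m X Y) Z := by rw [swap X Y, map_neg, LinearMap.neg_apply]
  rw [assocOf, h₁, h₂, h₃]
  linear_combination (norm := module) (2 : ℤ) • hjac X Y Z

local notation "e₁" => (![1, 0, 0] : Fin 3 → ℂ)
local notation "e₂" => (![0, 1, 0] : Fin 3 → ℂ)
local notation "e₃" => (![0, 0, 1] : Fin 3 → ℂ)

theorem m12_self (x : Fin 3 → ℂ) : m12 x x = 0 := by
  ext i; fin_cases i <;> simp [m12, mul_comm]

theorem m12_swap (x y : Fin 3 → ℂ) : m12 y x = -m12 x y :=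
  neg_apply_swap_of_self_eq_zero m12_self x y

theorem m12_jacobi (x y z : Fin 3 → ℂ) :
    m12 (m12 x y) z + m12 (m12 y z) x + m12 (m12 z x) y = 0 := by
  ext i; fin_cases i <;> (simp [m12]; ring)

theorem m12_e₁_e₂ : m12 e₁ e₂ = e₂ := by ext i; fin_cases i <;> simp [m12]

theorem m12_e₁_e₃ : m12 e₁ e₃ = -e₃ := by ext i; fin_cases i <;> simp [m12]

theorem m12_e₂_e₃ : m12 e₂ e₃ = e₁ := by ext i; fin_cases i <;> simp [m12]

theorem span_m12_products_eq_top :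
    Submodule.span ℂ {z : Fin 3 → ℂ | ∃ x y : Fin 3 → ℂ, z = m12 x y} = ⊤ := by
  refine eq_top_iff.2 ((Pi.basisFun ℂ (Fin 3)).span_eq.symm.le.trans (Submodule.span_mono ?_))
  rintro _ ⟨i, rfl⟩
  fin_cases i
  · exact ⟨e₂, e₃, by rw [m12_e₂_e₃]; ext j; fin_cases j <;> simp⟩
  · exact ⟨e₁, e₂, by rw [m12_e₁_e₂]; ext j; fin_cases j <;> simp⟩
  · exact ⟨e₃, e₁, by rw [m12_swap, m12_e₁_e₃, neg_neg]; ext j; fin_cases j <;> simp⟩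

/-- the 3-dimensional algebra with basis `e₁,e₂,e₃` and products
`e₁·e₂ = -e₂·e₁ = e₂`, `e₁·e₃ = -e₃·e₁ = -e₃`, `e₂·e₃ = -e₃·e₂ = e₁`,
`eᵢ·eᵢ = 0`, is an admissible Poisson algebra, every element is nilpotent,
yet `P·P = P`: it is a nilalgebra which is not nilpotent. -/
theorem stmt12 :
    (m12 ![1,0,0] ![0,1,0] = ![0,1,0] ∧ m12 ![0,1,0] ![1,0,0] = -![0,1,0] ∧
     m12 ![1,0,0] ![0,0,1] = -![0,0,1] ∧ m12 ![0,0,1] ![1,0,0] = ![0,0,1] ∧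
     m12 ![0,1,0] ![0,0,1] = ![1,0,0] ∧ m12 ![0,0,1] ![0,1,0] = -![1,0,0] ∧
     (∀ x : Fin 3 → ℂ, m12 x x = 0)) ∧
    IsAdmissible m12 ∧
    (∀ x : Fin 3 → ℂ, ∃ r : ℕ, pw m12 x r = 0) ∧
    Submodule.span ℂ {z : Fin 3 → ℂ | ∃ x y : Fin 3 → ℂ, z = m12 x y} = ⊤ := by
  refine ⟨⟨m12_e₁_e₂, ?_, m12_e₁_e₃, ?_, m12_e₂_e₃, ?_, m12_self⟩,
    isAdmissible_of_jacobi m12_self m12_jacobi, fun x => ⟨1, m12_self x⟩, span_m12_products_eq_top⟩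
  · rw [m12_swap, m12_e₁_e₂]
  · rw [m12_swap, m12_e₁_e₃, neg_neg]
  · rw [m12_swap, m12_e₂_e₃]
end

section
/- In the multiplication algebra of an admissible Poisson algebra, the left and right translation operators satisfy: L_x ∘ R_x = R_x ∘ L_x, 4L_{x·x} = 3L_x² - R_x² + 2R_x∘L_x, and 4R_{x·x} = 3R_x² - L_x² + 2R_x∘L_x, for every element x. -/
variable {K : Type*} [Field K] {P : Type*} [AddCommGroup P] [Module K P]

/-! Each identity is the admissibility relation at a suitable triple: at `(x, y, x)` its right side
vanishes, giving flexibility; at `(x, x, y)` it is the identity for `L_{x·x}`; and at `(y, x, x)`,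
combined with the previous one, it is three times the identity for `R_{x·x}`. -/

theorem zsmul_three_injective (h3 : (3 : K) ≠ 0) : Function.Injective fun v : P => (3 : ℤ) • v := by
  intro v w h
  have h' : (3 : K) • v = (3 : K) • w := by
    simpa only [← Int.cast_smul_eq_zsmul K, Int.cast_ofNat] using h
  exact smul_right_injective P h3 h'

namespace IsAdmissible

variable {m : P →ₗ[K] P →ₗ[K] P} (hm : IsAdmissible m)
include hm

theorem flexible (h3 : (3 : K) ≠ 0) (x y : P) : m (m x y) x = m x (m y x) := by
  have h := hm x y x
  unfold assocOf at h
  refine sub_eq_zero.mp (zsmul_three_injective h3 ?_)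
  simp only [h, smul_zero]
  abel

theorem four_zsmul_mul_self_mul (x y : P) :
    (4 : ℤ) • m (m x x) y =
      (3 : ℤ) • m x (m x y) - m (m y x) x + (2 : ℤ) • m (m x y) x := by
  have h := hm x x y
  unfold assocOf at h
  linear_combination (norm := module) h

theorem four_zsmul_mul_mul_self (h3 : (3 : K) ≠ 0) (x y : P) :
    (4 : ℤ) • m y (m x x) =
      (3 : ℤ) • m (m y x) x - m x (m x y) + (2 : ℤ) • m (m x y) x := by
  have h := hm y x x
  unfold assocOf at h
  apply zsmul_three_injective h3
  linear_combination (norm := module) (-4 : ℤ) • h - hm.four_zsmul_mul_self_mul x y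

end IsAdmissible

theorem stmt13_general (h3 : (3 : K) ≠ 0)
    (m : P →ₗ[K] P →ₗ[K] P) (hm : IsAdmissible m) :
    ∀ x y : P,
      m x (m y x) = m (m x y) x ∧
      (4 : ℤ) • m (m x x) y =
        (3 : ℤ) • m x (m x y) - m (m y x) x + (2 : ℤ) • m (m x y) x ∧
      (4 : ℤ) • m y (m x x) =
        (3 : ℤ) • m (m y x) x - m x (m x y) + (2 : ℤ) • m (m x y) x := fun x y =>
  ⟨(hm.flexible h3 x y).symm, hm.four_zsmul_mul_self_mul x y, hm.four_zsmul_mul_mul_self h3 x y⟩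

/-- identities among left and right translation operators in an
admissible Poisson algebra: `L_x R_x = R_x L_x`, `4 L_{x²} = 3 L_x² - R_x² + 2 R_x L_x`,
`4 R_{x²} = 3 R_x² - L_x² + 2 R_x L_x`. -/
theorem stmt13 (h2 : (2 : K) ≠ 0) (h3 : (3 : K) ≠ 0)
    (m : P →ₗ[K] P →ₗ[K] P) (hm : IsAdmissible m) :
    ∀ x y : P,
      m x (m y x) = m (m x y) x ∧
      (4 : ℤ) • m (m x x) y =
        (3 : ℤ) • m x (m x y) - m (m y x) x + (2 : ℤ) • m (m x y) x ∧
      (4 : ℤ) • m y (m x x) =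
        (3 : ℤ) • m (m y x) x - m x (m x y) + (2 : ℤ) • m (m x y) x :=
  stmt13_general h3 m hm
end

section
/- Let P be a finite-dimensional complex admissible Poisson algebra whose associated Lie algebra g_P is simple. Then the associated commutative associative product is trivial: X∙Y = 0 for all X, Y, equivalently X·Y = {X,Y} for all X, Y. -/
variable {K : Type*} [Field K] {P : Type*} [AddCommGroup P] [Module K P]

section AuxIdentities

variable {L : Type*} [AddCommGroup L] [Module ℂ L] (m : L →ₗ[ℂ] L →ₗ[ℂ] L)

/-- Leibniz rule for the symmetrized product with respect to the bracket. -/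
lemma aux_leib (hm : IsAdmissible m) (z x y : L) :
    brOf m z (bulOf m x y) = bulOf m (brOf m z x) y + bulOf m x (brOf m z y) := by
  have h1 := hm x y z
  have h2 := hm x z y
  have h3 := hm y x z
  have h4 := hm y z x
  have h5 := hm z x y
  have h6 := hm z y x
  simp only [assocOf] at h1 h2 h3 h4 h5 h6
  simp only [brOf, bulOf, map_add, map_sub, map_smul, LinearMap.add_apply, LinearMap.sub_apply,
    LinearMap.smul_apply]
  linear_combination (norm := module) (-(12:ℂ)⁻¹) • h1 + ((12:ℂ)⁻¹) • h2 - ((12:ℂ)⁻¹) • h3 +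
    ((12:ℂ)⁻¹) • h4 - ((12:ℂ)⁻¹) • h5 - ((12:ℂ)⁻¹) • h6

/-- Associativity of the symmetrized product. -/
lemma aux_assoc (hm : IsAdmissible m) (x y z : L) :
    bulOf m (bulOf m x y) z = bulOf m x (bulOf m y z) := by
  have h1 := hm x y z
  have h2 := hm x z y
  have h5 := hm z x y
  have h6 := hm z y x
  simp only [assocOf] at h1 h2 h5 h6
  simp only [brOf, bulOf, map_add, map_sub, map_smul, LinearMap.add_apply, LinearMap.sub_apply,
    LinearMap.smul_apply]
  linear_combination (norm := module) ((12:ℂ)⁻¹) • h1 + ((12:ℂ)⁻¹) • h2 -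
    ((12:ℂ)⁻¹) • h5 - ((12:ℂ)⁻¹) • h6

end AuxIdentities

section AuxNilpotent

open Module

/-- An endomorphism of a finite dimensional complex vector space all of whose positive
powers have zero trace is nilpotent. -/
theorem aux_isNilpotent_of_trace_pow {V : Type*} [AddCommGroup V] [Module ℂ V]
    [FiniteDimensional ℂ V] (f : Module.End ℂ V)
    (h : ∀ k : ℕ, LinearMap.trace ℂ V (f ^ (k + 1)) = 0) :
    IsNilpotent f := by
  classical
  have hInd := f.independent_maxGenEigenspace
  have hSup : ⨆ μ, f.maxGenEigenspace μ = ⊤ := f.iSup_maxGenEigenspace_eq_top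
  have hInt : DirectSum.IsInternal f.maxGenEigenspace :=
    DirectSum.isInternal_submodule_of_iSupIndep_of_iSup_eq_top hInd hSup
  have hfin : {μ : ℂ | f.maxGenEigenspace μ ≠ ⊥}.Finite :=
    WellFoundedGT.finite_ne_bot_of_iSupIndep hInd
  have hMapsF : ∀ μ : ℂ, Set.MapsTo f (f.maxGenEigenspace μ) (f.maxGenEigenspace μ) :=
    fun μ => f.mapsTo_maxGenEigenspace_of_comm rfl μ
  have hMaps : ∀ (n : ℕ) (μ : ℂ),
      Set.MapsTo (f ^ n) (f.maxGenEigenspace μ) (f.maxGenEigenspace μ) :=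
    fun n μ => f.mapsTo_maxGenEigenspace_of_comm (Commute.pow_right rfl n) μ
  have key : ∀ (n : ℕ) (μ : ℂ),
      LinearMap.trace ℂ _ ((f ^ n).restrict (hMaps n μ)) =
        μ ^ n * (finrank ℂ (f.maxGenEigenspace μ) : ℂ) := by
    intro n μ
    set g : Module.End ℂ (f.maxGenEigenspace μ) := f.restrict (hMapsF μ) with hg
    have hres : (f ^ n).restrict (hMaps n μ) = g ^ n := by
      rw [hg, ← Module.End.pow_restrict n (hMapsF μ)]
    have hnil : IsNilpotent (g - algebraMap ℂ _ μ) := by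
      have h1 := f.isNilpotent_restrict_maxGenEigenspace_sub_algebraMap μ
      have h2 : (f - algebraMap ℂ (Module.End ℂ V) μ).restrict
          (Module.End.mapsTo_maxGenEigenspace_of_comm
            (Algebra.mul_sub_algebraMap_commutes f μ) μ)
          = g - algebraMap ℂ _ μ := by
        ext x
        simp [hg, LinearMap.restrict_apply, Module.algebraMap_end_eq_smul_id]
        rfl
      rwa [h2] at h1
    have hco : Commute g (algebraMap ℂ (Module.End ℂ (f.maxGenEigenspace μ)) μ) :=
      (Algebra.commutes μ g).symm
    have hnil2 : IsNilpotent (g ^ n - algebraMap ℂ _ (μ ^ n)) := by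
      have hgeom := hco.geom_sum₂_mul n
      rw [map_pow]
      rw [← hgeom]
      refine Commute.isNilpotent_mul_left ?_ hnil
      have hgc : Commute g (g - algebraMap ℂ _ μ) := (Commute.refl g).sub_right hco
      have hac : Commute (algebraMap ℂ (Module.End ℂ (f.maxGenEigenspace μ)) μ)
          (g - algebraMap ℂ _ μ) := Algebra.commutes μ _
      exact Commute.sum_left _ _ _ fun i _ =>
        Commute.mul_left (hgc.pow_left i) (hac.pow_left _)
    have hsplit : g ^ n = algebraMap ℂ _ (μ ^ n) + (g ^ n - algebraMap ℂ _ (μ ^ n)) := by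
      abel
    have ht0 : LinearMap.trace ℂ _ (g ^ n - algebraMap ℂ _ (μ ^ n)) = 0 :=
      IsNilpotent.eq_zero (LinearMap.isNilpotent_trace_of_isNilpotent hnil2)
    rw [hres, hsplit, map_add, ht0, add_zero, Module.algebraMap_end_eq_smul_id, map_smul,
      LinearMap.trace_id, smul_eq_mul]
  have hTr : ∀ n : ℕ,
      ∑ μ ∈ hfin.toFinset, μ ^ (n + 1) * (finrank ℂ (f.maxGenEigenspace μ) : ℂ) = 0 := by
    intro n
    have h1 := (LinearMap.trace_eq_sum_trace_restrict' hInt hfin (hMaps (n + 1))).symm.trans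
      (h n)
    rw [← h1]
    exact Finset.sum_congr rfl fun μ _ => (key (n + 1) μ).symm
  have hzero : ∀ μ : ℂ, μ ≠ 0 → f.maxGenEigenspace μ = ⊥ := by
    intro μ0 hμ0
    by_contra hne
    set t : Finset ℂ := hfin.toFinset.filter (fun μ => μ ≠ 0) with ht
    have htsum : ∀ n : ℕ, ∑ μ ∈ t, (μ * (finrank ℂ (f.maxGenEigenspace μ) : ℂ)) * μ ^ n = 0 := by
      intro n
      have h1 := hTr n
      rw [← Finset.sum_filter_add_sum_filter_not hfin.toFinset (fun μ => μ ≠ 0)] at h1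
      have h2 : ∑ μ ∈ hfin.toFinset.filter (fun μ => ¬ μ ≠ 0), μ ^ (n + 1) * (finrank ℂ (f.maxGenEigenspace μ) : ℂ) = 0 := by
        refine Finset.sum_eq_zero fun μ hμ => ?_
        rw [Finset.mem_filter] at hμ
        have : μ = 0 := by simpa using hμ.2
        rw [this, zero_pow (Nat.succ_ne_zero n), zero_mul]
      rw [h2, add_zero] at h1
      rw [← h1]
      exact Finset.sum_congr rfl fun μ _ => by ring
    set ev : Fin t.card → ℂ := fun i => ((t.equivFin.symm i : {x // x ∈ t}) : ℂ) with hev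
    have hevinj : Function.Injective ev := fun i j hij =>
      t.equivFin.symm.injective (Subtype.coe_injective hij)
    have hvz : (fun i => ev i * (finrank ℂ (f.maxGenEigenspace (ev i)) : ℂ)) = 0 := by
      refine Matrix.eq_zero_of_forall_pow_sum_mul_pow_eq_zero hevinj fun j => ?_
      have h1 := htsum (j : ℕ)
      rw [← Finset.sum_coe_sort t (fun μ => (μ * (finrank ℂ (f.maxGenEigenspace μ) : ℂ)) * μ ^ (j : ℕ))] at h1
      rw [← Equiv.sum_comp t.equivFin.symm
        (fun x : {x // x ∈ t} => ((x : ℂ) * (finrank ℂ (f.maxGenEigenspace (x : ℂ)) : ℂ)) * (x : ℂ) ^ (j : ℕ))] at h1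
      exact h1
    have hμt : μ0 ∈ t := by
      rw [ht, Finset.mem_filter, Set.Finite.mem_toFinset]
      exact ⟨hne, hμ0⟩
    have h4 : ev (t.equivFin ⟨μ0, hμt⟩) = μ0 := by
      simp only [hev, Equiv.symm_apply_apply]
    have h3 := congrFun hvz (t.equivFin ⟨μ0, hμt⟩)
    rw [Pi.zero_apply] at h3
    rcases mul_eq_zero.mp h3 with h | h
    · rw [h4] at h
      exact hμ0 h
    · have h5 : finrank ℂ (f.maxGenEigenspace (ev (t.equivFin ⟨μ0, hμt⟩))) = 0 := by
        exact_mod_cast h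
      rw [h4] at h5
      exact hne (Submodule.finrank_eq_zero.mp h5)
  have hE0 : f.maxGenEigenspace 0 = ⊤ := by
    refine le_antisymm le_top ?_
    rw [← hSup]
    refine iSup_le fun μ => ?_
    rcases eq_or_ne μ 0 with rfl | hμ
    · exact le_rfl
    · rw [hzero μ hμ]; exact bot_le
  have hker : LinearMap.ker ((f - (0 : ℂ) • (1 : Module.End ℂ V)) ^ finrank ℂ V) = ⊤ := by
    rw [← Module.End.genEigenspace_nat, ← Module.End.maxGenEigenspace_eq_genEigenspace_finrank,
      hE0]
  refine ⟨finrank ℂ V, ?_⟩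
  have hf0 : f - (0 : ℂ) • (1 : Module.End ℂ V) = f := by simp
  rw [← hf0]
  exact LinearMap.ker_eq_top.mp hker

/-- A commuting family of nilpotent endomorphisms of a nontrivial finite dimensional
space has a common nonzero kernel vector. -/
theorem aux_exists_common_ker {V : Type*} [AddCommGroup V] [Module ℂ V]
    [FiniteDimensional ℂ V] [Nontrivial V] {ι : Type*} (f : ι → Module.End ℂ V)
    (hc : ∀ i j, Commute (f i) (f j)) (hn : ∀ i, IsNilpotent (f i)) :
    ∃ v : V, v ≠ 0 ∧ ∀ i, f i v = 0 := by
  classical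
  suffices H : ∀ (n : ℕ) (W : Submodule ℂ V), finrank ℂ W = n → W ≠ ⊥ →
      (∀ i, ∀ w ∈ W, f i w ∈ W) → ∃ v, v ≠ 0 ∧ ∀ i, f i v = 0 by
    refine H (finrank ℂ (⊤ : Submodule ℂ V)) ⊤ rfl ?_ (fun i w _ => trivial)
    exact top_ne_bot
  intro n
  induction n using Nat.strong_induction_on with
  | _ n IH =>
    intro W hrank hWbot hWinv
    by_cases hz : ∀ i, ∀ w ∈ W, f i w = 0
    · obtain ⟨v, hvW, hv0⟩ := Submodule.exists_mem_ne_zero_of_ne_bot hWbot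
      exact ⟨v, hv0, fun i => hz i v hvW⟩
    · push_neg at hz
      obtain ⟨i0, w0, hw0W, hw00⟩ := hz
      have hiter : ∀ k : ℕ, ((f i0) ^ k) w0 ∈ W := fun k =>
        Module.End.pow_apply_mem_of_forall_mem k (hWinv i0) w0 hw0W
      obtain ⟨N, hN⟩ := hn i0
      have hex : ∃ k, ((f i0) ^ k) w0 = 0 := ⟨N, by rw [hN]; rfl⟩
      have hk0 : Nat.find hex ≠ 0 := by
        intro h0
        have hsp := Nat.find_spec hex
        rw [h0, pow_zero] at hsp
        exact hw00 (by rw [show w0 = (0 : V) from hsp]; simp)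
      obtain ⟨k', hk'⟩ := Nat.exists_eq_succ_of_ne_zero hk0
      have hv'0 : ((f i0) ^ k') w0 ≠ 0 := Nat.find_min hex (by omega)
      have hfv' : f i0 (((f i0) ^ k') w0) = 0 := by
        have hsp := Nat.find_spec hex
        rw [hk', pow_succ'] at hsp
        simpa [Module.End.mul_apply] using hsp
      set W' : Submodule ℂ V := W ⊓ LinearMap.ker (f i0) with hW'
      have hv'W' : ((f i0) ^ k') w0 ∈ W' :=
        Submodule.mem_inf.mpr ⟨hiter k', LinearMap.mem_ker.mpr hfv'⟩
      have hW'bot : W' ≠ ⊥ := fun h => hv'0 (by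
        have := hv'W'
        rw [h] at this
        simpa using this)
      have hlt : W' < W := lt_of_le_of_ne inf_le_left (fun h => hw00 (by
        have hw0' : w0 ∈ W' := h.symm ▸ hw0W
        exact LinearMap.mem_ker.mp (Submodule.mem_inf.mp hw0').2))
      have hW'inv : ∀ i, ∀ w ∈ W', f i w ∈ W' := by
        intro i w hw
        rw [Submodule.mem_inf] at hw ⊢
        refine ⟨hWinv i w hw.1, LinearMap.mem_ker.mpr ?_⟩
        have hcomm : (f i0) ((f i) w) = (f i) ((f i0) w) := by
          have := DFunLike.congr_fun (hc i0 i) w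
          simpa [Module.End.mul_apply] using this
        rw [hcomm, LinearMap.mem_ker.mp hw.2, map_zero]
      exact IH (finrank ℂ W')
        (by rw [← hrank]; exact Submodule.finrank_lt_finrank_of_lt hlt) W' rfl hW'bot hW'inv

end AuxNilpotent

/-- if `P` is a finite-dimensional complex admissible Poisson
algebra whose associated Lie algebra is simple, then the associated commutative
associative product is trivial: `X∙Y = 0`, i.e. `X·Y = {X,Y}`. -/
theorem stmt16 {P : Type*} [AddCommGroup P] [Module ℂ P] [FiniteDimensional ℂ P]
    (m : P →ₗ[ℂ] P →ₗ[ℂ] P) (hm : IsAdmissible m)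
    (hLieNonab : ∃ x y : P, brOf m x y ≠ 0)
    (hLieSimple : ∀ I : Submodule ℂ P,
      (∀ x ∈ I, ∀ y : P, brOf m y x ∈ I) → I = ⊥ ∨ I = ⊤) :
    ∀ X Y : P, bulOf m X Y = 0 ∧ m X Y = brOf m X Y := by
  suffices hbul : ∀ x y : P, bulOf m x y = 0 by
    intro X Y
    refine ⟨hbul X Y, ?_⟩
    have h := hbul X Y
    rw [bulOf] at h
    rw [brOf]
    linear_combination (norm := module) h
  obtain ⟨x0, y0, hx0⟩ := hLieNonab
  haveI : Nontrivial P := nontrivial_of_ne _ _ hx0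
  -- the symmetrized product as a linear family of endomorphisms
  set S : P →ₗ[ℂ] Module.End ℂ P := (2 : ℂ)⁻¹ • (m + m.flip) with hS
  have hSapp : ∀ x y : P, S x y = bulOf m x y := by
    intro x y
    simp [hS, bulOf, LinearMap.add_apply, LinearMap.smul_apply, LinearMap.flip_apply]
  set B : P →ₗ[ℂ] Module.End ℂ P := (2 : ℂ)⁻¹ • (m - m.flip) with hB
  have hBapp : ∀ x y : P, B x y = brOf m x y := by
    intro x y
    simp [hB, brOf, LinearMap.sub_apply, LinearMap.smul_apply, LinearMap.flip_apply]
  have hcomm : ∀ x y : P, bulOf m x y = bulOf m y x := by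
    intro x y
    rw [bulOf, bulOf]
    module
  have hleib := aux_leib m hm
  have hassoc := aux_assoc m hm
  -- multiplication operators
  have hSmul : ∀ x y : P, S x * S y = S (bulOf m x y) := by
    intro x y
    ext u
    simp only [Module.End.mul_apply, hSapp]
    rw [← hassoc x y u]
  have hScomm : ∀ x y : P, Commute (S x) (S y) := by
    intro x y
    unfold Commute SemiconjBy
    rw [hSmul, hSmul, hcomm x y]
  -- the trace of every multiplication operator vanishes
  have hbrS : ∀ z w : P, S (brOf m z w) = B z * S w - S w * B z := by
    intro z w
    ext u
    simp only [Module.End.mul_apply, LinearMap.sub_apply, hSapp, hBapp]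
    have h := hleib z w u
    rw [h]
    abel
  have htau_br : ∀ z w : P, LinearMap.trace ℂ P (S (brOf m z w)) = 0 := by
    intro z w
    rw [hbrS, map_sub, LinearMap.trace_mul_comm, sub_self]
  set J : Submodule ℂ P := Submodule.span ℂ {w : P | ∃ a c : P, brOf m a c = w} with hJ
  have hJcl : ∀ x ∈ J, ∀ y : P, brOf m y x ∈ J := fun x _ y =>
    Submodule.subset_span ⟨y, x, rfl⟩
  have hJtop : J = ⊤ := by
    rcases hLieSimple J hJcl with h | h
    · exfalso
      apply hx0
      have hmem : brOf m x0 y0 ∈ J := Submodule.subset_span ⟨x0, y0, rfl⟩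
      rw [h] at hmem
      simpa using hmem
    · exact h
  have htau : ∀ w : P, LinearMap.trace ℂ P (S w) = 0 := by
    intro w
    have hw : w ∈ J := hJtop ▸ Submodule.mem_top
    induction hw using Submodule.span_induction with
    | mem x hx => obtain ⟨a, c, rfl⟩ := hx; exact htau_br a c
    | zero => simp
    | add a b _ _ ha hb => rw [map_add, map_add, ha, hb, add_zero]
    | smul r a _ ha => rw [map_smul, map_smul, ha, smul_zero]
  -- all multiplication operators are nilpotent
  have hpow : ∀ (x : P) (k : ℕ), ∃ w : P, (S x) ^ (k + 1) = S w := by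
    intro x k
    induction k with
    | zero => exact ⟨x, pow_one _⟩
    | succ k ih =>
      obtain ⟨w, hw⟩ := ih
      exact ⟨bulOf m w x, by rw [pow_succ, hw, hSmul]⟩
  have hnilS : ∀ x : P, IsNilpotent (S x) := by
    intro x
    refine aux_isNilpotent_of_trace_pow (S x) fun k => ?_
    obtain ⟨w, hw⟩ := hpow x k
    rw [hw]
    exact htau w
  -- the annihilator ideal
  set A : Submodule ℂ P := ⨅ x : P, LinearMap.ker (S x) with hA
  have hAmem : ∀ a : P, a ∈ A ↔ ∀ x : P, bulOf m x a = 0 := by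
    intro a
    simp only [hA, Submodule.mem_iInf, LinearMap.mem_ker]
    constructor
    · intro h x; rw [← hSapp]; exact h x
    · intro h x; rw [hSapp]; exact h x
  have hAcl : ∀ a ∈ A, ∀ y : P, brOf m y a ∈ A := by
    intro a ha y
    rw [hAmem] at ha ⊢
    intro x
    have h := hleib y x a
    rw [ha x, ha (brOf m y x)] at h
    have hz : brOf m y (0 : P) = 0 := by simp [brOf]
    rw [hz, zero_add] at h
    exact h.symm
  rcases hLieSimple A hAcl with hbot | htop
  · exfalso
    obtain ⟨v, hv0, hv⟩ := aux_exists_common_ker (fun x : P => S x) hScomm hnilS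
    have hvA : v ∈ A := by
      rw [hAmem]
      intro x
      rw [← hSapp]
      exact hv x
    rw [hbot] at hvA
    exact hv0 (by simpa using hvA)
  · intro x y
    have hy : y ∈ A := htop ▸ Submodule.mem_top
    exact (hAmem y).mp hy x
end

section
/- Let P be an admissible Poisson algebra, and let φ : P × P → P be a bilinear map with symmetric part φ_s and skew-symmetric part φ_a. Then the Poisson coboundary decomposes as δ²_P φ = 2δ_C φ_a + 4δ_H φ_s + 2δ̃_C φ_s + 2δ̃_H φ_a + 2L₁(φ_a) + 2L₂(φ_s), where δ_C φ_a(X,Y,Z) = {φ_a(X,Y),Z} + {φ_a(Y,Z),X} + {φ_a(Z,X),Y} + φ_a({X,Y},Z) + φ_a({Y,Z},X) + φ_a({Z,X},Y), δ_H φ_s(X,Y,Z) = φ_s(X,Y)∙Z - X∙φ_s(Y,Z) + φ_s(X∙Y,Z) - φ_s(X,Y∙Z), L₁(φ)(X,Y,Z) = φ(X∙Y,Z) - φ(X,Z)∙Y - X∙φ(Y,Z), L₂(φ)(X,Y,Z) = -3φ(X,{Y,Z}) + {φ(X,Y),Z} - {φ(X,Z),Y}, and δ̃_C, δ̃_H are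 the same formulas as δ_C, δ_H applied to φ_s, φ_a respectively. -/
variable {K : Type*} [Field K] {P : Type*} [AddCommGroup P] [Module K P]

/-- The Poisson coboundary `δ²_P φ` of a 2-cochain `φ`. -/
def deltaP (m φ : P →ₗ[K] P →ₗ[K] P) (X Y Z : P) : P :=
  (3 : ℤ) • φ (m X Y) Z - (3 : ℤ) • φ X (m Y Z) - φ (m X Z) Y - φ (m Y Z) X +
    φ (m Y X) Z + φ (m Z X) Y +
  (3 : ℤ) • m (φ X Y) Z - (3 : ℤ) • m X (φ Y Z) - m (φ X Z) Y - m (φ Y Z) X +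
    m (φ Y X) Z + m (φ Z X) Y

/-- The symmetric part of a 2-cochain. -/
def symPart (φ : P →ₗ[K] P →ₗ[K] P) (X Y : P) : P := (2 : K)⁻¹ • (φ X Y + φ Y X)

/-- The skew-symmetric part of a 2-cochain. -/
def skewPart (φ : P →ₗ[K] P →ₗ[K] P) (X Y : P) : P := (2 : K)⁻¹ • (φ X Y - φ Y X)

/-- The Chevalley coboundary formula (with bracket `br`). -/
def deltaC (br ψ : P → P → P) (X Y Z : P) : P :=
  br (ψ X Y) Z + br (ψ Y Z) X + br (ψ Z X) Y +
    ψ (br X Y) Z + ψ (br Y Z) X + ψ (br Z X) Y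

/-- The Harrison coboundary formula (with product `bul`). -/
def deltaH (bul ψ : P → P → P) (X Y Z : P) : P :=
  bul (ψ X Y) Z - bul X (ψ Y Z) + ψ (bul X Y) Z - ψ X (bul Y Z)

/-- The operator `L₁`. -/
def opL1 (bul ψ : P → P → P) (X Y Z : P) : P :=
  ψ (bul X Y) Z - bul (ψ X Z) Y - bul X (ψ Y Z)

/-- The operator `L₂`. -/
def opL2 (br ψ : P → P → P) (X Y Z : P) : P :=
  -((3 : ℤ) • ψ X (br Y Z)) + br (ψ X Y) Z - br (ψ X Z) Y

/-! Split the cochain as `φ = φ_s + φ_a`; `δ²_P` is additive in `φ`. For a symmetric cochain,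
writing `{X,Y}` and `X∙Y` through the product and comparing coefficients gives
`4δ_H + 2δ_C + 2L₂`; for a skew-symmetric one the same expansion gives `2δ_C + 2δ_H + 2L₁`. -/

section

variable (m φ ψ : P →ₗ[K] P →ₗ[K] P)

def symPartBilin : P →ₗ[K] P →ₗ[K] P := (2 : K)⁻¹ • (φ + φ.flip)

def skewPartBilin : P →ₗ[K] P →ₗ[K] P := (2 : K)⁻¹ • (φ - φ.flip)

theorem coe_symPartBilin : (fun X Y => symPartBilin φ X Y) = symPart φ := rfl

theorem coe_skewPartBilin : (fun X Y => skewPartBilin φ X Y) = skewPart φ := rfl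

theorem symPartBilin_swap (X Y : P) : symPartBilin φ Y X = symPartBilin φ X Y := by
  simp only [symPartBilin, LinearMap.smul_apply, LinearMap.add_apply, LinearMap.flip_apply,
    add_comm]

theorem skewPartBilin_swap (X Y : P) : skewPartBilin φ Y X = -skewPartBilin φ X Y := by
  simp only [skewPartBilin, LinearMap.smul_apply, LinearMap.sub_apply, LinearMap.flip_apply,
    ← smul_neg, neg_sub]

theorem symPartBilin_add_skewPartBilin (h2 : (2 : K) ≠ 0) :
    symPartBilin φ + skewPartBilin φ = φ := by
  ext X Y
  simp only [symPartBilin, skewPartBilin, LinearMap.add_apply, LinearMap.smul_apply,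
    LinearMap.sub_apply, ← smul_add]
  rw [add_add_sub_cancel, ← two_smul K, smul_smul, inv_mul_cancel₀ h2, one_smul]

theorem skewPartBilin_eq_self (h2 : (2 : K) ≠ 0) (hψ : ∀ X Y, ψ Y X = -ψ X Y) :
    skewPartBilin ψ = ψ := by
  ext X Y
  simp only [skewPartBilin, LinearMap.smul_apply, LinearMap.sub_apply, LinearMap.flip_apply,
    hψ X Y, sub_neg_eq_add]
  rw [← two_smul K, smul_smul, inv_mul_cancel₀ h2, one_smul]

theorem deltaP_add (X Y Z : P) :
    deltaP m (φ + ψ) X Y Z = deltaP m φ X Y Z + deltaP m ψ X Y Z := by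
  simp only [deltaP, LinearMap.add_apply, map_add]
  abel

theorem deltaP_eq_of_symm (h2 : (2 : K) ≠ 0) (hψ : ∀ X Y, ψ Y X = ψ X Y) (X Y Z : P) :
    deltaP m ψ X Y Z =
      (4 : ℤ) • deltaH (bulOf m) (fun X Y => ψ X Y) X Y Z +
      (2 : ℤ) • deltaC (brOf m) (fun X Y => ψ X Y) X Y Z +
      (2 : ℤ) • opL2 (brOf m) (fun X Y => ψ X Y) X Y Z := by
  simp only [deltaP, deltaC, deltaH, opL2, brOf, bulOf, map_add, map_sub, map_smul,
    LinearMap.add_apply, LinearMap.sub_apply, LinearMap.smul_apply, smul_add, smul_sub,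
    smul_neg, smul_smul, hψ]
  match_scalars <;> field_simp <;> ring

theorem deltaP_eq_of_skew (h2 : (2 : K) ≠ 0) (hψ : ∀ X Y, ψ Y X = -ψ X Y) (X Y Z : P) :
    deltaP m ψ X Y Z =
      (2 : ℤ) • deltaC (brOf m) (fun X Y => ψ X Y) X Y Z +
      (2 : ℤ) • deltaH (bulOf m) (fun X Y => ψ X Y) X Y Z +
      (2 : ℤ) • opL1 (bulOf m) (fun X Y => ψ X Y) X Y Z := by
  -- `hψ` would loop as a simp lemma; once `ψ` is replaced by its skew part, `ψ X Y` and `ψ Y X`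
  -- are independent atoms and the identity holds coefficientwise.
  rw [← skewPartBilin_eq_self ψ h2 hψ]
  simp only [skewPartBilin, deltaP, deltaC, deltaH, opL1, brOf, bulOf, map_add, map_sub,
    map_smul, LinearMap.add_apply, LinearMap.sub_apply, LinearMap.smul_apply,
    LinearMap.flip_apply, smul_add, smul_sub, smul_smul]
  match_scalars <;> field_simp <;> ring

end

theorem stmt19_general (h2 : (2 : K) ≠ 0)
    (m : P →ₗ[K] P →ₗ[K] P)
    (φ : P →ₗ[K] P →ₗ[K] P) :
    ∀ X Y Z : P, deltaP m φ X Y Z =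
      (2 : ℤ) • deltaC (brOf m) (skewPart φ) X Y Z +
      (4 : ℤ) • deltaH (bulOf m) (symPart φ) X Y Z +
      (2 : ℤ) • deltaC (brOf m) (symPart φ) X Y Z +
      (2 : ℤ) • deltaH (bulOf m) (skewPart φ) X Y Z +
      (2 : ℤ) • opL1 (bulOf m) (skewPart φ) X Y Z +
      (2 : ℤ) • opL2 (brOf m) (symPart φ) X Y Z := by
  intro X Y Z
  conv_lhs => rw [← symPartBilin_add_skewPartBilin φ h2]
  rw [deltaP_add, deltaP_eq_of_symm m _ h2 (symPartBilin_swap φ),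
    deltaP_eq_of_skew m _ h2 (skewPartBilin_swap φ), coe_symPartBilin, coe_skewPartBilin]
  abel

/-- decomposition of the Poisson coboundary:
`δ²_P φ = 2δ_C φ_a + 4δ_H φ_s + 2δ̃_C φ_s + 2δ̃_H φ_a + 2L₁(φ_a) + 2L₂(φ_s)`. -/
theorem stmt19 (h2 : (2 : K) ≠ 0) (h3 : (3 : K) ≠ 0)
    (m : P →ₗ[K] P →ₗ[K] P) (hm : IsAdmissible m)
    (φ : P →ₗ[K] P →ₗ[K] P) :
    ∀ X Y Z : P, deltaP m φ X Y Z =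
      (2 : ℤ) • deltaC (brOf m) (skewPart φ) X Y Z +
      (4 : ℤ) • deltaH (bulOf m) (symPart φ) X Y Z +
      (2 : ℤ) • deltaC (brOf m) (symPart φ) X Y Z +
      (2 : ℤ) • deltaH (bulOf m) (skewPart φ) X Y Z +
      (2 : ℤ) • opL1 (bulOf m) (skewPart φ) X Y Z +
      (2 : ℤ) • opL2 (brOf m) (symPart φ) X Y Z :=
  stmt19_general h2 m φ
end
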